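/- The process matrix W^{Cyril} = (1/4)[ I⊗I⊗I⊗I + (1/√2)( σ³⊗σ³⊗σ³⊗I + σ³⊗I⊗σ¹⊗σ¹ ) ] on (ℂ²)^{⊗4} (ordered A_I, A_O, B_I, B_O) is positive semidefinite. -/

import Mathlib

open scoped BigOperators Kronecker ComplexOrder

/-- Pauli X. -/
def sigma1 : Matrix (Fin 2) (Fin 2) ℂ := !![0, 1; 1, 0]

/-- Pauli Z. -/
def sigma3 : Matrix (Fin 2) (Fin 2) ℂ := !![1, 0; 0, -1]

/-- The process matrix
`W^{Cyril} = (1/4)[I⊗I⊗I⊗I + (1/√2)(σ³⊗σ³⊗σ³⊗I + σ³⊗I⊗σ¹⊗σ¹)]`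
on `(ℂ²)^{⊗4}` with tensor factors ordered `A_I, A_O, B_I, B_O` and grouped
as `(A_I × A_O) × (B_I × B_O)`. -/
noncomputable def WCyril :
    Matrix ((Fin 2 × Fin 2) × (Fin 2 × Fin 2)) ((Fin 2 × Fin 2) × (Fin 2 × Fin 2)) ℂ :=
  (1 / 4 : ℂ) • ((1 : Matrix ((Fin 2 × Fin 2) × (Fin 2 × Fin 2)) ((Fin 2 × Fin 2) × (Fin 2 × Fin 2)) ℂ)
    + ((Real.sqrt 2 : ℂ))⁻¹ •
      ((sigma3 ⊗ₖ sigma3) ⊗ₖ (sigma3 ⊗ₖ (1 : Matrix (Fin 2) (Fin 2) ℂ))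
        + (sigma3 ⊗ₖ (1 : Matrix (Fin 2) (Fin 2) ℂ)) ⊗ₖ (sigma1 ⊗ₖ sigma1)))

/-!
Both Pauli strings `P = σ³σ³σ³I` and `Q = σ³Iσ¹σ¹` are Hermitian involutions, and they
anticommute because they differ by a single anticommuting pair `σ³, σ¹` (in the slot `B_I`).
Hence `(P + Q)² = 2`, so `R = (P + Q)/√2` is a Hermitian involution, and
`1 + R = (1 + R)ᴴ (1 + R) / 2` is positive semidefinite; `W^{Cyril} = (1 + R)/4`.
-/

open Matrix

theorem add_mul_self_eq_two_of_anticommute {R : Type*} [Ring R] {P Q : R} (hP : P * P = 1) (hQ : Q * Q = 1)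
    (hPQ : P * Q = -(Q * P)) : (P + Q) * (P + Q) = 2 := by
  calc (P + Q) * (P + Q) = P * P + Q * Q + (P * Q + Q * P) := by noncomm_ring
    _ = 2 := by rw [hP, hQ, hPQ, neg_add_cancel, add_zero, one_add_one_eq_two]

namespace Matrix

section Kronecker

variable {α l n : Type*}

theorem IsHermitian.kronecker [CommRing α] [StarRing α] {A : Matrix l l α} {B : Matrix n n α}
    (hA : A.IsHermitian) (hB : B.IsHermitian) : (A ⊗ₖ B).IsHermitian := by
  rw [IsHermitian, conjTranspose_kronecker, hA.eq, hB.eq]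

variable [Fintype l] [Fintype n]

theorem kronecker_mul_self_eq_one [CommSemiring α] [DecidableEq l] [DecidableEq n]
    {A : Matrix l l α} {B : Matrix n n α} (hA : A * A = 1) (hB : B * B = 1) :
    (A ⊗ₖ B) * (A ⊗ₖ B) = 1 := by
  rw [← mul_kronecker_mul, hA, hB, one_kronecker_one]

theorem _root_.Commute.kronecker [CommSemiring α] {A₁ B₁ : Matrix l l α}
    {A₂ B₂ : Matrix n n α} (h₁ : Commute A₁ B₁) (h₂ : Commute A₂ B₂) :
    Commute (A₁ ⊗ₖ A₂) (B₁ ⊗ₖ B₂) := by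
  rw [Commute, SemiconjBy, ← mul_kronecker_mul, ← mul_kronecker_mul, h₁.eq, h₂.eq]

theorem kronecker_anticommute_of_commute_left [CommRing α] {A₁ B₁ : Matrix l l α}
    {A₂ B₂ : Matrix n n α} (h₁ : Commute A₁ B₁) (h₂ : A₂ * B₂ = -(B₂ * A₂)) :
    (A₁ ⊗ₖ A₂) * (B₁ ⊗ₖ B₂) = -((B₁ ⊗ₖ B₂) * (A₁ ⊗ₖ A₂)) := by
  rw [← mul_kronecker_mul, ← mul_kronecker_mul, h₁.eq, h₂, ← neg_one_smul α,
    kronecker_smul, neg_one_smul]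

theorem kronecker_anticommute_of_commute_right [CommRing α] {A₁ B₁ : Matrix l l α}
    {A₂ B₂ : Matrix n n α} (h₁ : A₁ * B₁ = -(B₁ * A₁)) (h₂ : Commute A₂ B₂) :
    (A₁ ⊗ₖ A₂) * (B₁ ⊗ₖ B₂) = -((B₁ ⊗ₖ B₂) * (A₁ ⊗ₖ A₂)) := by
  rw [← mul_kronecker_mul, ← mul_kronecker_mul, h₁, h₂.eq, ← neg_one_smul α,
    smul_kronecker, neg_one_smul]

end Kronecker

variable {𝕜 n : Type*} [RCLike 𝕜] [Fintype n] [DecidableEq n]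

theorem IsHermitian.posSemidef_one_add_of_mul_self_eq_one {A : Matrix n n 𝕜}
    (hA : A.IsHermitian) (hA2 : A * A = 1) : (1 + A).PosSemidef := by
  have hsq : (1 + A)ᴴ * (1 + A) = (2 : 𝕜) • (1 + A) := by
    rw [conjTranspose_add, conjTranspose_one, hA.eq, add_mul, mul_add, mul_add, hA2]
    simp only [Matrix.one_mul, Matrix.mul_one, two_smul]
    abel
  have h : 1 + A = (2⁻¹ : 𝕜) • ((1 + A)ᴴ * (1 + A)) := by
    rw [hsq, smul_smul, inv_mul_cancel₀ two_ne_zero, one_smul]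
  rw [h]
  exact (posSemidef_conjTranspose_mul_self _).smul (by positivity)

theorem posSemidef_one_add_inv_sqrt_two_smul_add {P Q : Matrix n n 𝕜}
    (hPh : P.IsHermitian) (hQh : Q.IsHermitian) (hP : P * P = 1) (hQ : Q * Q = 1)
    (hPQ : P * Q = -(Q * P)) : (1 + ((√2 : ℝ) : 𝕜)⁻¹ • (P + Q)).PosSemidef := by
  set c : 𝕜 := ((√2 : ℝ) : 𝕜)⁻¹
  have hc : IsSelfAdjoint c := by simp [c, IsSelfAdjoint, RCLike.conj_ofReal]
  have hcc : c * c * 2 = 1 := by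
    rw [← mul_inv, ← RCLike.ofReal_mul, Real.mul_self_sqrt zero_le_two,
      RCLike.ofReal_ofNat, inv_mul_cancel₀ two_ne_zero]
  refine IsHermitian.posSemidef_one_add_of_mul_self_eq_one ((hPh.add hQh).smul hc) ?_
  rw [smul_mul_smul_comm, add_mul_self_eq_two_of_anticommute hP hQ hPQ,
    Algebra.smul_def, ← map_ofNat (algebraMap 𝕜 _) 2, ← map_mul, hcc, map_one]

end Matrix

theorem sigma1_isHermitian : sigma1.IsHermitian := by
  ext i j; fin_cases i <;> fin_cases j <;> simp [sigma1]

theorem sigma3_isHermitian : sigma3.IsHermitian := by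
  ext i j; fin_cases i <;> fin_cases j <;> simp [sigma3]

theorem sigma1_mul_self : sigma1 * sigma1 = 1 := by
  simp [sigma1, one_fin_two]

theorem sigma3_mul_self : sigma3 * sigma3 = 1 := by
  simp [sigma3, one_fin_two]

theorem sigma3_mul_sigma1 : sigma3 * sigma1 = -(sigma1 * sigma3) := by
  simp [sigma1, sigma3]

/-- `W^{Cyril}` is positive semidefinite. -/
theorem WCyril_posSemidef : WCyril.PosSemidef := by
  unfold WCyril
  refine PosSemidef.smul (posSemidef_one_add_inv_sqrt_two_smul_add ?_ ?_ ?_ ?_ ?_) (by positivity)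
  · exact (sigma3_isHermitian.kronecker sigma3_isHermitian).kronecker
      (sigma3_isHermitian.kronecker isHermitian_one)
  · exact (sigma3_isHermitian.kronecker isHermitian_one).kronecker
      (sigma1_isHermitian.kronecker sigma1_isHermitian)
  · exact kronecker_mul_self_eq_one (kronecker_mul_self_eq_one sigma3_mul_self sigma3_mul_self)
      (kronecker_mul_self_eq_one sigma3_mul_self (mul_one 1))
  · exact kronecker_mul_self_eq_one (kronecker_mul_self_eq_one sigma3_mul_self (mul_one 1))
      (kronecker_mul_self_eq_one sigma1_mul_self sigma1_mul_self)
  · exact kronecker_anticommute_of_commute_left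
      ((Commute.refl sigma3).kronecker (Commute.one_right sigma3))
      (kronecker_anticommute_of_commute_right sigma3_mul_sigma1 (Commute.one_left sigma1))
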